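/- arXiv:0905.3197 — 4 statements merged into one kernel-verified Lean document; each statement's English description precedes it below -/
import Mathlib

section
/- Let G and H be finite simple graphs, let x_i ∈ V(G), and let G_i' and the map π from distributions on G_i' × H to distributions on G × H be as defined. If D_0 and D_n are distributions on G_i' × H such that D_n is reachable from D_0 in G_i' × H, then some distribution containing π(D_n) is reachable from π(D_0) in G × H. -/
open scoped BigOperators

/-- A single pebbling move on a simple graph: remove two pebbles from `u`
and add one pebble on an adjacent vertex `v`. -/
def PebMove {V : Type*} [DecidableEq V] (G : SimpleGraph V) (D D' : V → ℕ) : Prop :=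
  ∃ u v, G.Adj u v ∧ 2 ≤ D u ∧
    D' = fun w => if w = u then D u - 2 else if w = v then D v + 1 else D w

/-- `D'` is reachable from `D`: some sequence of pebbling moves starting at `D`
produces a distribution containing `D'`. -/
def Reaches {V : Type*} [DecidableEq V] (G : SimpleGraph V) (D D' : V → ℕ) : Prop :=
  ∃ D'', Relation.ReflTransGen (PebMove G) D D'' ∧ ∀ v, D' v ≤ D'' v

/-- Total number of pebbles of a distribution. -/
def pebTotal {V : Type*} [Fintype V] (D : V → ℕ) : ℕ := ∑ v, D v

/-- The pebbling number of a set `S` of target distributions on `G`: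
the least `N` (possibly `∞`) such that every member of `S` is reachable from
every distribution with at least `N` pebbles in total. -/
noncomputable def pebSet {V : Type*} [Fintype V] [DecidableEq V] (G : SimpleGraph V)
    (S : Set (V → ℕ)) : ℕ∞ :=
  sInf {N : ℕ∞ | ∀ D₀ : V → ℕ, N ≤ (pebTotal D₀ : ℕ∞) → ∀ D ∈ S, Reaches G D₀ D}

/-- The pebbling number of a single target distribution. -/
noncomputable def peb {V : Type*} [Fintype V] [DecidableEq V] (G : SimpleGraph V)
    (D : V → ℕ) : ℕ∞ :=
  pebSet G {D}

/-- The distribution with `t` pebbles on `v` and none elsewhere. -/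
def unitDist {V : Type*} [DecidableEq V] (t : ℕ) (v : V) : V → ℕ :=
  fun w => if w = v then t else 0


/-- The graph `Gᵢ'` obtained from `G` by adding a single new vertex `none`
joined by a single edge to `xᵢ`. -/
def extendGraph {V : Type*} (G : SimpleGraph V) (xi : V) : SimpleGraph (Option V) where
  Adj a b :=
    (∃ u v, a = some u ∧ b = some v ∧ G.Adj u v) ∨
    (a = some xi ∧ b = none) ∨ (a = none ∧ b = some xi)
  symm := by
    constructor
    rintro a b (⟨u, v, rfl, rfl, h⟩ | ⟨rfl, rfl⟩ | ⟨rfl, rfl⟩)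
    · exact Or.inl ⟨v, u, rfl, rfl, h.symm⟩
    · exact Or.inr (Or.inr ⟨rfl, rfl⟩)
    · exact Or.inr (Or.inl ⟨rfl, rfl⟩)
  loopless := by
    constructor
    rintro a (⟨u, v, rfl, h, hadj⟩ | ⟨h1, h2⟩ | ⟨h1, h2⟩) <;> simp_all

/-- The map `π` sending a distribution on `Gᵢ' × H` to a distribution on
`G × H`, replacing each pebble on `(x', y)` by two pebbles on `(xᵢ, y)`. -/
def projDist {V W : Type*} [DecidableEq V] (xi : V) (D : Option V × W → ℕ) :
    V × W → ℕ :=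
  fun p =>
    if p.1 = xi then D (some p.1, p.2) + 2 * D (none, p.2) else D (some p.1, p.2)

/-!
Pebbling moves are additive: a move `D → D'` along the edge `uv` means `D' + 2·[u] = D + [v]`,
and `π` is additive with `π[(x, y)] = [(x, y)]` and `π[(x', y)] = 2·[(xᵢ, y)]`. So `π` maps a
move of `Gᵢ' □ H` along an edge of `G □ H` to the same move, a move along an `H`-edge of the new
fibre to two moves along the corresponding edge of the `xᵢ`-fibre, and a move across the edge
`xᵢx'` to a loss of pebbles. Since reachability is monotone in the initial distribution, these
simulations compose.
-/

section Pebbling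

variable {V : Type*} [DecidableEq V] {G : SimpleGraph V} {D D' E : V → ℕ}

theorem pebMove_iff_add :
    PebMove G D D' ↔ ∃ u v, G.Adj u v ∧ D' + Pi.single u 2 = D + Pi.single v 1 := by
  refine exists₂_congr fun u v => and_congr_right fun hadj => ?_
  have hne := hadj.ne
  constructor
  · rintro ⟨h2, rfl⟩
    funext w
    simp only [Pi.add_apply, Pi.single_apply]
    split_ifs <;> subst_vars <;> simp_all
  · intro h
    have hu := congrFun h u
    simp only [Pi.add_apply, Pi.single_eq_same, Pi.single_eq_of_ne hne] at hu
    refine ⟨by omega, funext fun w => ?_⟩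
    have hw := congrFun h w
    simp only [Pi.add_apply, Pi.single_apply] at hw ⊢
    split_ifs at hw ⊢ <;> subst_vars <;> simp_all; omega

theorem PebMove.add_right (h : PebMove G D D') (F : V → ℕ) : PebMove G (D + F) (D' + F) := by
  obtain ⟨u, v, hadj, h⟩ := pebMove_iff_add.mp h
  refine pebMove_iff_add.mpr ⟨u, v, hadj, ?_⟩
  rw [add_right_comm, h, add_right_comm]

theorem reflTransGen_pebMove_of_add {u v : V} (hadj : G.Adj u v) :
    ∀ (k : ℕ) {D D' : V → ℕ}, D' + Pi.single u (2 * k) = D + Pi.single v k →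
      Relation.ReflTransGen (PebMove G) D D'
  | 0, D, D', h => by
    simp only [mul_zero, Pi.single_zero, add_zero] at h
    exact h ▸ .refl
  | k + 1, D, D', h => by
    have hDu : Pi.single u 2 ≤ D + Pi.single v 1 := by
      intro w
      have hw := congrFun h w
      simp only [Pi.add_apply, Pi.single_apply] at hw ⊢
      split_ifs at hw ⊢ <;> subst_vars <;> simp_all; omega
    set E := D + Pi.single v 1 - Pi.single u 2
    have hmove : E + Pi.single u 2 = D + Pi.single v 1 := tsub_add_cancel_of_le hDu
    refine .head (pebMove_iff_add.mpr ⟨u, v, hadj, hmove⟩)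
      (reflTransGen_pebMove_of_add hadj k (add_right_cancel (b := Pi.single u 2) ?_))
    calc D' + Pi.single u (2 * k) + Pi.single u 2
        = D + Pi.single v 1 + Pi.single v k := by
          rw [add_assoc, ← Pi.single_add, ← mul_add_one, h, add_assoc, ← Pi.single_add,
            add_comm 1]
      _ = E + Pi.single v k + Pi.single u 2 := by rw [← hmove, add_right_comm]

theorem PebMove.reaches (h : PebMove G D D') : Reaches G D D' :=
  ⟨D', .single h, fun _ => le_rfl⟩

theorem Reaches.of_le (h : D' ≤ D) : Reaches G D D' :=
  ⟨D, .refl, h⟩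

theorem Reaches.mono_left (hDE : D ≤ E) (h : Reaches G D D') : Reaches G E D' := by
  obtain ⟨D'', hchain, hle⟩ := h
  obtain ⟨F, rfl⟩ := exists_add_of_le hDE
  exact ⟨D'' + F, hchain.lift (· + F) fun _ _ hmove => hmove.add_right F,
    le_trans (α := V → ℕ) hle le_self_add⟩

theorem Reaches.trans {D'' : V → ℕ} (h : Reaches G D D') (h' : Reaches G D' D'') :
    Reaches G D D'' := by
  obtain ⟨E, hchain, hle⟩ := h
  obtain ⟨E', hchain', hle'⟩ := h'.mono_left hle
  exact ⟨E', hchain.trans hchain', hle'⟩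

end Pebbling

section Projection

variable {V W : Type*} [DecidableEq V] (xi : V)

theorem projDist_add (D E : Option V × W → ℕ) :
    projDist xi (D + E) = projDist xi D + projDist xi E := by
  funext p
  simp only [projDist, Pi.add_apply]
  split_ifs <;> ring

theorem projDist_mono {D E : Option V × W → ℕ} (h : D ≤ E) : projDist xi D ≤ projDist xi E := by
  rw [← add_tsub_cancel_of_le h, projDist_add]
  exact le_self_add

variable [DecidableEq W]

theorem projDist_single_some (a : V) (y : W) (n : ℕ) :
    projDist xi (Pi.single (some a, y) n) = Pi.single (a, y) n := by
  funext ⟨b, z⟩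
  simp only [projDist, Pi.single_apply, Prod.mk.injEq, Option.some.injEq, reduceCtorEq,
    false_and, if_false, mul_zero, add_zero, ite_self]

theorem projDist_single_none (y : W) (n : ℕ) :
    projDist xi (Pi.single (none, y) n) = Pi.single (xi, y) (2 * n) := by
  funext ⟨b, z⟩
  simp only [projDist, Pi.single_apply, Prod.mk.injEq, reduceCtorEq, false_and, if_false,
    true_and, zero_add]
  split_ifs <;> simp_all

open SimpleGraph

variable {G : SimpleGraph V} {H : SimpleGraph W}

theorem reaches_projDist_of_pebMove {D D' : Option V × W → ℕ}
    (h : PebMove (extendGraph G xi □ H) D D') :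
    Reaches (G □ H) (projDist xi D) (projDist xi D') := by
  obtain ⟨⟨u, y⟩, ⟨v, y'⟩, hadj, hmove⟩ := pebMove_iff_add.mp h
  have hπ := congrArg (projDist xi) hmove
  simp only [projDist_add] at hπ
  rcases boxProd_adj.mp hadj with ⟨hG, rfl : y = y'⟩ | ⟨hH, rfl : u = v⟩
  · rcases hG with ⟨a, b, rfl, rfl, hab⟩ | ⟨rfl, rfl⟩ | ⟨rfl, rfl⟩
    · rw [projDist_single_some, projDist_single_some] at hπ
      exact (pebMove_iff_add.mpr ⟨(a, y), (b, y), boxProd_adj.mpr (.inl ⟨hab, rfl⟩), hπ⟩).reaches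
    · rw [projDist_single_some, projDist_single_none] at hπ
      exact Reaches.of_le (add_right_cancel hπ).le
    · rw [projDist_single_none, projDist_single_some,
        show 2 * 2 = 3 + 1 from rfl, Pi.single_add, ← add_assoc] at hπ
      exact Reaches.of_le (add_right_cancel hπ ▸ le_self_add)
  · have hadj' : (G □ H).Adj (u.getD xi, y) (u.getD xi, y') := boxProd_adj.mpr (.inr ⟨hH, rfl⟩)
    cases u with
    | some a =>
      rw [projDist_single_some, projDist_single_some] at hπ
      exact (pebMove_iff_add.mpr ⟨_, _, hadj', hπ⟩).reaches
    | none =>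
      rw [projDist_single_none, projDist_single_none] at hπ
      exact ⟨_, reflTransGen_pebMove_of_add hadj' 2 hπ, fun _ => le_rfl⟩

theorem reaches_projDist_of_reflTransGen {D D' : Option V × W → ℕ}
    (h : Relation.ReflTransGen (PebMove (extendGraph G xi □ H)) D D') :
    Reaches (G □ H) (projDist xi D) (projDist xi D') := by
  induction h with
  | refl => exact Reaches.of_le le_rfl
  | tail _ hmove ih => exact ih.trans (reaches_projDist_of_pebMove xi hmove)

end Projection

open SimpleGraph in
/-- If `Dₙ` is reachable from `D₀` in `Gᵢ' × H`, then a distribution containing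
`π(Dₙ)` is reachable from `π(D₀)` in `G × H`. -/
theorem pulling_back {V W : Type*} [DecidableEq V] [DecidableEq W]
    (G : SimpleGraph V) (H : SimpleGraph W) (xi : V)
    (D₀ Dₙ : Option V × W → ℕ)
    (h : Reaches (extendGraph G xi □ H) D₀ Dₙ) :
    Reaches (G □ H) (projDist xi D₀) (projDist xi Dₙ) := by
  obtain ⟨D, hchain, hle⟩ := h
  exact (reaches_projDist_of_reflTransGen xi hchain).trans (Reaches.of_le (projDist_mono xi hle))
end

section
/- Let G be the weighted complete graph on four vertices {x_1, x_2, x_3, x_4} in which the edges (x_1,x_2) and (x_3,x_4) have weight 2 and every other edge has weight 5, and let Γ be the distribution with one pebble on each vertex. Then: (i) for every vertex v of G, Γ is reachable from the distribution of 13 pebbles on v; and (ii) Γ is not reachable from the distribution with 9 pebbles on x_1 and 4 pebbles on x_2 (and none elsewhere). In particular, the weighted analog of Sjöstrand's cover pebbling theorem fails: π(G, Γ) is strictly larger than the least n such that Γ is reachable from n pebbles placed on any single vertex. -/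
/-!
Give a pebble on `x₁` or `x₂` weight 1 and a pebble on `x₃` or `x₄` weight 5. No move increases
the weighted total: a weight-5 move from `{x₁, x₂}` into `{x₃, x₄}` keeps it and keeps both
`D x₁` and `D x₂` modulo 5, a move between `x₁` and `x₂` loses 1, and any other move loses at
least 5. Covering all four vertices needs a weighted total of at least 12, so starting from
`(9, 4, 0, 0)`, of total 13, at most one move between `x₁` and `x₂` can be made; tracking the
residues of `D x₁` and `D x₂` modulo 5 then rules out every covering distribution.
-/


open scoped BigOperators

/-- A weighted graph: a finite simple graph together with a symmetric weight
function assigning a positive integer to each edge. -/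
structure WeightedGraph (V : Type*) where
  toSimpleGraph : SimpleGraph V
  w : V → V → ℕ
  w_symm : ∀ u v, w u v = w v u
  w_pos : ∀ u v, toSimpleGraph.Adj u v → 0 < w u v

/-- A weighted pebbling move along the edge `(u, v)`: remove `w u v` pebbles
from `u` and add one pebble on the adjacent vertex `v`. -/
def WPebMove {V : Type*} [DecidableEq V] (G : WeightedGraph V) (D D' : V → ℕ) : Prop :=
  ∃ u v, G.toSimpleGraph.Adj u v ∧ G.w u v ≤ D u ∧
    D' = fun z => if z = u then D u - G.w u v else if z = v then D v + 1 else D z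

/-- `D'` is reachable from `D` in the weighted graph `G`: some sequence of
weighted pebbling moves starting at `D` produces a distribution containing `D'`. -/
def WReaches {V : Type*} [DecidableEq V] (G : WeightedGraph V) (D D' : V → ℕ) : Prop :=
  ∃ D'', Relation.ReflTransGen (WPebMove G) D D'' ∧ ∀ v, D' v ≤ D'' v

/-- The weighted pebbling number of a set `S` of target distributions. -/
noncomputable def wpebSet {V : Type*} [Fintype V] [DecidableEq V] (G : WeightedGraph V)
    (S : Set (V → ℕ)) : ℕ∞ :=
  sInf {N : ℕ∞ | ∀ D₀ : V → ℕ, N ≤ (pebTotal D₀ : ℕ∞) → ∀ D ∈ S, WReaches G D₀ D}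

/-- The weighted pebbling number of a single target distribution. -/
noncomputable def wpeb {V : Type*} [Fintype V] [DecidableEq V] (G : WeightedGraph V)
    (D : V → ℕ) : ℕ∞ :=
  wpebSet G {D}

/-- The weighted complete graph on four vertices in which the edges
`(x₁,x₂)` and `(x₃,x₄)` have weight 2 and every other edge has weight 5. -/
def K4w : WeightedGraph (Fin 4) where
  toSimpleGraph := ⊤
  w := fun u v =>
    if (u = 0 ∧ v = 1) ∨ (u = 1 ∧ v = 0) ∨ (u = 2 ∧ v = 3) ∨ (u = 3 ∧ v = 2)
    then 2 else 5
  w_symm := by decide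
  w_pos := by decide

section Reachability

variable {V : Type*} [DecidableEq V] {G : WeightedGraph V}

lemma WPebMove.exists_le_of_le {D E D' : V → ℕ} (hmove : WPebMove G D D')
    (hDE : ∀ v, D v ≤ E v) : ∃ E', WPebMove G E E' ∧ ∀ v, D' v ≤ E' v := by
  obtain ⟨u, v, hadj, hle, rfl⟩ := hmove
  refine ⟨_, ⟨u, v, hadj, hle.trans (hDE u), rfl⟩, fun z => ?_⟩
  have := hDE z
  dsimp only
  split_ifs with hzu <;> subst_vars <;> omega

lemma reflTransGen_wPebMove_exists_le {D E D' : V → ℕ}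
    (h : Relation.ReflTransGen (WPebMove G) D D') (hDE : ∀ v, D v ≤ E v) :
    ∃ E', Relation.ReflTransGen (WPebMove G) E E' ∧ ∀ v, D' v ≤ E' v := by
  induction h using Relation.ReflTransGen.head_induction_on generalizing E with
  | refl => exact ⟨E, .refl, hDE⟩
  | head hmove _ ih =>
    obtain ⟨E₁, hE₁, hle₁⟩ := hmove.exists_le_of_le hDE
    obtain ⟨E', hE', hle'⟩ := ih hle₁
    exact ⟨E', .head hE₁ hE', hle'⟩

lemma WReaches.mono_left {D E T : V → ℕ} (h : WReaches G D T) (hDE : ∀ v, D v ≤ E v) :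
    WReaches G E T := by
  obtain ⟨D', hD', hT⟩ := h
  obtain ⟨E', hE', hle⟩ := reflTransGen_wPebMove_exists_le hD' hDE
  exact ⟨E', hE', fun v => (hT v).trans (hle v)⟩

lemma not_wReaches_of_invariant (I : (V → ℕ) → Prop)
    (hmove : ∀ D D', I D → WPebMove G D D' → I D') {D₀ T : V → ℕ} (h₀ : I D₀)
    (hT : ∀ D, I D → ¬ ∀ v, T v ≤ D v) : ¬ WReaches G D₀ T := by
  rintro ⟨D, hD, hTD⟩
  refine hT D ?_ hTD
  clear hTD
  induction hD with
  | refl => exact h₀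
  | tail _ hstep ih => exact hmove _ _ ih hstep

lemma pebTotal_lt_wpeb_of_not_wReaches [Fintype V] {D₀ T : V → ℕ}
    (h : ¬ WReaches G D₀ T) : (pebTotal D₀ : ℕ∞) < wpeb G T := by
  refine (ENat.add_one_le_iff (ENat.natCast_ne_top _)).mp
    (le_sInf fun N hN => Order.add_one_le_of_lt ?_)
  by_contra! hle
  exact h (hN D₀ hle T rfl)

end Reachability

lemma unitDist_le_unitDist {V : Type*} [DecidableEq V] {s t : ℕ} (h : s ≤ t) (v z : V) :
    unitDist s v z ≤ unitDist t v z := by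
  unfold unitDist
  split_ifs <;> omega

lemma K4w_adj {u v : Fin 4} (h : u ≠ v) : K4w.toSimpleGraph.Adj u v := h

lemma K4w_wReaches_cover_of_unitDist (v : Fin 4) :
    WReaches K4w (unitDist 13 v) (fun _ => 1) := by
  -- 13 = 2 + 5 + 5 + 1: feed the weight-2 neighbour, then the two weight-5 ones.
  fin_cases v
  · exact ⟨_, .head ⟨0, 1, K4w_adj (by decide), by decide, rfl⟩
      (.head ⟨0, 2, K4w_adj (by decide), by decide, rfl⟩
      (.head ⟨0, 3, K4w_adj (by decide), by decide, rfl⟩ .refl)), by decide⟩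
  · exact ⟨_, .head ⟨1, 0, K4w_adj (by decide), by decide, rfl⟩
      (.head ⟨1, 2, K4w_adj (by decide), by decide, rfl⟩
      (.head ⟨1, 3, K4w_adj (by decide), by decide, rfl⟩ .refl)), by decide⟩
  · exact ⟨_, .head ⟨2, 3, K4w_adj (by decide), by decide, rfl⟩
      (.head ⟨2, 0, K4w_adj (by decide), by decide, rfl⟩
      (.head ⟨2, 1, K4w_adj (by decide), by decide, rfl⟩ .refl)), by decide⟩
  · exact ⟨_, .head ⟨3, 2, K4w_adj (by decide), by decide, rfl⟩
      (.head ⟨3, 0, K4w_adj (by decide), by decide, rfl⟩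
      (.head ⟨3, 1, K4w_adj (by decide), by decide, rfl⟩ .refl)), by decide⟩

def K4wPotential (D : Fin 4 → ℕ) : ℕ := D 0 + D 1 + 5 * (D 2 + D 3)

-- A weighted-total deficit of 1 can only come from one move between `x₁` and `x₂`,
-- which shifts the residues `(4, 4)` to `(2, 0)` or `(0, 2)`.
def K4wInvariant (D : Fin 4 → ℕ) : Prop :=
  K4wPotential D ≤ 13 ∧
    (K4wPotential D = 13 → D 0 % 5 = 4 ∧ D 1 % 5 = 4) ∧
    (K4wPotential D = 12 → D 0 % 5 = 2 ∧ D 1 % 5 = 0 ∨ D 0 % 5 = 0 ∧ D 1 % 5 = 2)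

lemma K4wInvariant.of_wPebMove {D D' : Fin 4 → ℕ} (h : K4wInvariant D)
    (hmove : WPebMove K4w D D') : K4wInvariant D' := by
  obtain ⟨u, v, hadj, hle, rfl⟩ := hmove
  unfold K4wInvariant K4wPotential at *
  fin_cases u <;> fin_cases v <;> simp [K4w] at hadj hle ⊢ <;> omega

lemma K4wInvariant.not_cover {D : Fin 4 → ℕ} (h : K4wInvariant D) : ¬ ∀ v, 1 ≤ D v := by
  intro hD
  have := hD 0; have := hD 1; have := hD 2; have := hD 3
  unfold K4wInvariant K4wPotential at h
  omega

lemma K4w_not_wReaches_cover :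
    ¬ WReaches K4w (fun i => if i = 0 then 9 else if i = 1 then 4 else 0) (fun _ => 1) :=
  not_wReaches_of_invariant K4wInvariant (fun _ _ => K4wInvariant.of_wPebMove)
    (by simp [K4wInvariant, K4wPotential]) fun _ => K4wInvariant.not_cover

/-- The weighted analog of Sjöstrand's cover pebbling theorem fails: on `K4w`,
13 pebbles on any single vertex cover the graph, but 9 pebbles on `x₁` together
with 4 pebbles on `x₂` do not; hence `π(G, Γ)` exceeds the least `n` such that
`Γ` is reachable from `n` pebbles on any single vertex. -/
theorem weighted_cover_pebbling_counterexample :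
    (∀ v : Fin 4, WReaches K4w (unitDist 13 v) (fun _ => 1)) ∧
    ¬ WReaches K4w (fun i => if i = 0 then 9 else if i = 1 then 4 else 0)
        (fun _ => 1) ∧
    sInf {N : ℕ∞ | ∀ (u : Fin 4) (n : ℕ), N ≤ (n : ℕ∞) →
        WReaches K4w (unitDist n u) (fun _ => 1)}
      < wpeb K4w (fun _ => 1) := by
  refine ⟨K4w_wReaches_cover_of_unitDist, K4w_not_wReaches_cover, ?_⟩
  have hsingle : sInf {N : ℕ∞ | ∀ (u : Fin 4) (n : ℕ), N ≤ (n : ℕ∞) →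
      WReaches K4w (unitDist n u) (fun _ => 1)} ≤ 13 :=
    sInf_le fun u n hn => (K4w_wReaches_cover_of_unitDist u).mono_left
      (unitDist_le_unitDist (by exact_mod_cast hn) u)
  have hcover := pebTotal_lt_wpeb_of_not_wReaches K4w_not_wReaches_cover
  have htotal : pebTotal (fun i : Fin 4 => if i = 0 then 9 else if i = 1 then 4 else 0) = 13 := by
    decide
  rw [htotal] at hcover
  exact hsingle.trans_lt hcover
end

section
/- For every n ≥ 4, the target-selectable pebbling number of the two endpoint targets on the path P_n equals the pebbling number of the cycle on n−1 vertices: ρ(P_n, {δ_{x_1}, δ_{x_n}}) = π(C_{n−1}). -/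
open scoped BigOperators

/-- The target-selectable pebbling number of a set `S` of target distributions:
the least `N` (possibly `∞`) such that from every distribution with at least
`N` pebbles in total, at least one member of `S` is reachable. -/
noncomputable def tsPeb {V : Type*} [Fintype V] [DecidableEq V] (G : SimpleGraph V)
    (S : Set (V → ℕ)) : ℕ∞ :=
  sInf {N : ℕ∞ | ∀ D₀ : V → ℕ, N ≤ (pebTotal D₀ : ℕ∞) → ∃ D ∈ S, Reaches G D₀ D}

/-!
Gluing the two endpoints of `P_{k+3}` to a vertex `v` of `C_{k+2}` is a graph homomorphism
`wrap v`, and pushing distributions forward along a homomorphism preserves the total and turns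
moves into moves. So if every large distribution on the path reaches an endpoint, every large
distribution on the cycle reaches `v` (lift it along `wrap v` first). Conversely, push a path
distribution with empty endpoints to the cycle and take a solution reaching the glued vertex `0`:
until a pebble first lands on `0`, every move avoids `0` and lifts to the path, and the move that
first lands on `0` lifts to a move onto an endpoint.
-/

open Finset Function Relation SimpleGraph

section pushDist

variable {V W X : Type*} [Fintype V] [DecidableEq W]

def pushDist (f : V → W) (D : V → ℕ) (w : W) : ℕ :=
  ∑ v with f v = w, D v

theorem pebTotal_pushDist [Fintype W] (f : V → W) (D : V → ℕ) :
    pebTotal (pushDist f D) = pebTotal D :=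
  sum_fiberwise univ f D

theorem pushDist_add (f : V → W) (D E : V → ℕ) :
    pushDist f (D + E) = pushDist f D + pushDist f E :=
  funext fun _ => sum_add_distrib

theorem pushDist_comp [Fintype W] [DecidableEq X] (g : W → X) (f : V → W) (D : V → ℕ) :
    pushDist (g ∘ f) D = pushDist g (pushDist f D) := by
  funext x
  simp only [pushDist, sum_fiberwise_eq_sum_filter, mem_filter, mem_univ, true_and, comp_apply]

theorem pushDist_id [DecidableEq V] (D : V → ℕ) : pushDist id D = D := by
  funext v
  simp [pushDist, filter_eq']

theorem pushDist_surjective [Fintype W] [DecidableEq V] {f : V → W} (hf : Surjective f) :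
    Surjective (pushDist f) := by
  obtain ⟨s, hs⟩ := hf.hasRightInverse
  exact fun D => ⟨pushDist s D, by rw [← pushDist_comp, hs.comp_eq_id, pushDist_id]⟩

theorem pushDist_apply_of_forall_eq_iff [DecidableEq V] {f : V → W} {w : W} {v : V}
    (h : ∀ x, f x = w ↔ x = v) (D : V → ℕ) : pushDist f D w = D v := by
  rw [pushDist, filter_congr fun x _ => h x, filter_eq', if_pos (mem_univ v), sum_singleton]

theorem le_pushDist_apply (f : V → W) (D : V → ℕ) (v : V) : D v ≤ pushDist f D (f v) :=
  single_le_sum (fun _ _ => Nat.zero_le _) (by simp)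

theorem pushDist_apply_eq_zero {f : V → W} {w : W} {D : V → ℕ}
    (h : ∀ x, f x = w → D x = 0) : pushDist f D w = 0 :=
  sum_eq_zero fun x hx => h x (mem_filter.1 hx).2

theorem pushDist_unitDist [DecidableEq V] (f : V → W) (t : ℕ) (v : V) :
    pushDist f (unitDist t v) = unitDist t (f v) := by
  funext w
  simp [pushDist, unitDist, eq_comm]

end pushDist

section moves

variable {V W : Type*} [DecidableEq V] [DecidableEq W] {G : SimpleGraph V} {H : SimpleGraph W}

theorem move_add_unitDist {D : V → ℕ} {u v : V} (huv : u ≠ v) (h2 : 2 ≤ D u) :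
    (fun w => if w = u then D u - 2 else if w = v then D v + 1 else D w) + unitDist 2 u =
      D + unitDist 1 v := by
  funext w
  simp only [Pi.add_apply, unitDist]
  grind

theorem reaches_unitDist_of_pos {D : V → ℕ} {v : V} (h : 0 < D v) :
    Reaches G D (unitDist 1 v) :=
  ⟨D, .refl, fun w => by grind [unitDist]⟩

theorem PebMove.reaches_head {D E D' : V → ℕ} (hDE : PebMove G D E) (hE : Reaches G E D') :
    Reaches G D D' :=
  let ⟨D'', hED'', hle⟩ := hE
  ⟨D'', hED''.head hDE, hle⟩

variable [Fintype V]

theorem pushDist_move (f : V → W) {D : V → ℕ} {u v : V} (huv : f u ≠ f v) (h2 : 2 ≤ D u) :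
    pushDist f (fun w => if w = u then D u - 2 else if w = v then D v + 1 else D w) =
      fun w => if w = f u then pushDist f D (f u) - 2
        else if w = f v then pushDist f D (f v) + 1 else pushDist f D w := by
  apply add_left_injective (unitDist 2 (f u))
  dsimp only
  rw [← pushDist_unitDist, ← pushDist_add, move_add_unitDist (ne_of_apply_ne f huv) h2,
    pushDist_add, pushDist_unitDist, pushDist_unitDist,
    move_add_unitDist huv (h2.trans (le_pushDist_apply f D u))]

theorem PebMove.map (f : G →g H) {D D' : V → ℕ} (h : PebMove G D D') :
    PebMove H (pushDist f D) (pushDist f D') := by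
  obtain ⟨u, v, huv, h2, rfl⟩ := h
  have hfuv := f.map_adj huv
  exact ⟨f u, f v, hfuv, h2.trans (le_pushDist_apply f D u), pushDist_move f hfuv.ne h2⟩

theorem Reaches.map (f : G →g H) {D D' : V → ℕ} (h : Reaches G D D') :
    Reaches H (pushDist f D) (pushDist f D') :=
  let ⟨D'', hDD'', hle⟩ := h
  ⟨pushDist f D'', hDD''.lift (pushDist f) fun _ _ => PebMove.map f,
    fun _ => sum_le_sum fun v _ => hle v⟩

end moves

section wrap

open Fin.NatCast

variable {k : ℕ}

def wrap (v : Fin (k + 2)) : pathGraph (k + 3) →g cycleGraph (k + 2) where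
  toFun i := (i.val : Fin (k + 2)) + v
  map_rel' {x y} h := by
    rw [pathGraph_adj] at h
    rw [cycleGraph_adj]
    rcases h with h | h
    · right
      simp only [← h, Nat.cast_succ]
      abel
    · left
      simp only [← h, Nat.cast_succ]
      abel

theorem wrap_apply (v : Fin (k + 2)) (i : Fin (k + 3)) : wrap v i = (i.val : Fin (k + 2)) + v :=
  rfl

theorem wrap_zero (v : Fin (k + 2)) : wrap v 0 = v := by
  simp [wrap_apply]

theorem wrap_last (v : Fin (k + 2)) : wrap v (Fin.last (k + 2)) = v := by
  simp [wrap_apply]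

theorem wrap_zero_castSucc (i : Fin (k + 2)) : wrap 0 (Fin.castSucc i) = i := by
  simp [wrap_apply]

theorem wrap_castSucc_sub (v w : Fin (k + 2)) : wrap v (Fin.castSucc (w - v)) = w := by
  simp [wrap_apply]

theorem wrap_surjective (v : Fin (k + 2)) : Surjective (wrap v) :=
  fun w => ⟨_, wrap_castSucc_sub v w⟩

theorem wrap_zero_eq_iff {u : Fin (k + 2)} (hu : u ≠ 0) (x : Fin (k + 3)) :
    wrap 0 x = u ↔ x = Fin.castSucc u := by
  induction x using Fin.lastCases with
  | last => simp [wrap_last, hu.symm, (Fin.castSucc_ne_last u).symm]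
  | cast i => simp [wrap_zero_castSucc]

theorem exists_adj_wrap_zero_eq {u v : Fin (k + 2)} (hu : u ≠ 0)
    (huv : (cycleGraph (k + 2)).Adj u v) :
    ∃ x, (pathGraph (k + 3)).Adj (Fin.castSucc u) x ∧ wrap 0 x = v := by
  rcases cycleGraph_adj.1 huv with h | h
  · refine ⟨Fin.castSucc (u - 1), pathGraph_adj.2 (Or.inr ?_), ?_⟩
    · have := Fin.pos_iff_ne_zero.2 hu
      simp only [Fin.val_castSucc, Fin.val_sub_one_of_ne_zero hu]
      omega
    · rw [wrap_apply, add_zero, Fin.val_castSucc, Fin.cast_val_eq_self, ← h, sub_sub_cancel]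
  · refine ⟨u.succ, pathGraph_adj.2 (Or.inl (by simp)), ?_⟩
    simp [wrap_apply, ← h]

theorem pushDist_wrap_zero_apply_of_ne_zero {u : Fin (k + 2)} (hu : u ≠ 0)
    (E : Fin (k + 3) → ℕ) :
    pushDist (wrap 0) E u = E (Fin.castSucc u) :=
  pushDist_apply_of_forall_eq_iff (wrap_zero_eq_iff hu) E

theorem pushDist_wrap_zero_apply_zero {E : Fin (k + 3) → ℕ} (h0 : E 0 = 0)
    (hl : E (Fin.last _) = 0) : pushDist (wrap 0) E 0 = 0 := by
  refine pushDist_apply_eq_zero fun x hx => ?_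
  induction x using Fin.lastCases with
  | last => exact hl
  | cast i =>
    rw [wrap_zero_castSucc] at hx
    rwa [hx, Fin.castSucc_zero]

theorem reaches_endpoint_of_reflTransGen_wrap_zero {A B : Fin (k + 2) → ℕ}
    (hAB : ReflTransGen (PebMove (cycleGraph (k + 2))) A B) (hB : 1 ≤ B 0)
    {E : Fin (k + 3) → ℕ} (hEA : pushDist (wrap 0) E = A) (h0 : E 0 = 0)
    (hl : E (Fin.last _) = 0) :
    Reaches (pathGraph (k + 3)) E (unitDist 1 0) ∨
      Reaches (pathGraph (k + 3)) E (unitDist 1 (Fin.last _)) := by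
  induction hAB using ReflTransGen.head_induction_on generalizing E with
  | refl =>
    rw [← hEA, pushDist_wrap_zero_apply_zero h0 hl] at hB
    omega
  | head hAC _ ih =>
    subst hEA
    obtain ⟨u, v, huv, h2, rfl⟩ := hAC
    have hu : u ≠ 0 := by
      rintro rfl
      rw [pushDist_wrap_zero_apply_zero h0 hl] at h2
      omega
    obtain ⟨x, hux, rfl⟩ := exists_adj_wrap_zero_eq hu huv
    rw [pushDist_wrap_zero_apply_of_ne_zero hu] at h2
    have hmove : PebMove (pathGraph (k + 3)) E _ := ⟨_, x, hux, h2, rfl⟩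
    have hpush := pushDist_move (wrap 0) ((wrap 0).map_adj hux).ne h2
    rw [wrap_zero_castSucc] at hpush
    set E' := fun w => if w = Fin.castSucc u then E (Fin.castSucc u) - 2
      else if w = x then E x + 1 else E w
    -- The lifted move either puts a pebble on an endpoint or keeps both endpoints empty.
    by_cases hE' : E' 0 = 0 ∧ E' (Fin.last _) = 0
    · exact (ih hpush hE'.1 hE'.2).imp hmove.reaches_head hmove.reaches_head
    · rcases not_and_or.1 hE' with h | h
      · exact .inl (hmove.reaches_head (reaches_unitDist_of_pos (Nat.pos_of_ne_zero h)))
      · exact .inr (hmove.reaches_head (reaches_unitDist_of_pos (Nat.pos_of_ne_zero h)))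

theorem reaches_of_reaches_endpoint (v : Fin (k + 2)) {E : Fin (k + 3) → ℕ}
    (h : Reaches (pathGraph (k + 3)) E (unitDist 1 0) ∨
      Reaches (pathGraph (k + 3)) E (unitDist 1 (Fin.last _))) :
    Reaches (cycleGraph (k + 2)) (pushDist (wrap v) E) (unitDist 1 v) := by
  rcases h with h | h
  · simpa [pushDist_unitDist, wrap_zero] using h.map (wrap v)
  · simpa [pushDist_unitDist, wrap_last] using h.map (wrap v)

theorem reaches_endpoint_of_reaches_wrap_zero {E : Fin (k + 3) → ℕ}
    (h : Reaches (cycleGraph (k + 2)) (pushDist (wrap 0) E) (unitDist 1 0)) :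
    Reaches (pathGraph (k + 3)) E (unitDist 1 0) ∨
      Reaches (pathGraph (k + 3)) E (unitDist 1 (Fin.last _)) := by
  by_cases h0 : E 0 = 0
  · by_cases hl : E (Fin.last _) = 0
    · obtain ⟨B, hB, hle⟩ := h
      have hB0 : 1 ≤ B 0 := by simpa [unitDist] using hle 0
      exact reaches_endpoint_of_reflTransGen_wrap_zero hB hB0 rfl h0 hl
    · exact .inr (reaches_unitDist_of_pos (Nat.pos_of_ne_zero hl))
  · exact .inl (reaches_unitDist_of_pos (Nat.pos_of_ne_zero h0))

end wrap

open SimpleGraph in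
/-- The target-selectable pebbling number of the two endpoint targets on the
path `Pₙ` equals the pebbling number of the cycle `C_{n-1}`. -/
theorem ts_path_endpoints_eq_cycle (n : ℕ) (hn : 4 ≤ n) :
    tsPeb (pathGraph n)
        {unitDist 1 (⟨0, by omega⟩ : Fin n), unitDist 1 (⟨n - 1, by omega⟩ : Fin n)}
      = pebSet (cycleGraph (n - 1)) {D | ∃ v : Fin (n - 1), D = unitDist 1 v} := by
  obtain ⟨k, rfl⟩ : ∃ k, n = k + 3 := ⟨n - 3, by omega⟩
  change tsPeb (pathGraph (k + 3)) {unitDist 1 0, unitDist 1 (Fin.last (k + 2))} =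
    pebSet (cycleGraph (k + 2)) {D | ∃ v, D = unitDist 1 v}
  unfold tsPeb pebSet
  congr 1
  ext N
  simp only [Set.mem_ofPred_eq, Set.mem_insert_iff, Set.mem_singleton_iff, or_and_right,
    exists_or, exists_eq_left, forall_exists_index]
  constructor
  · rintro h D hN _ v rfl
    obtain ⟨E, rfl⟩ := pushDist_surjective (wrap_surjective v) D
    rw [pebTotal_pushDist] at hN
    exact reaches_of_reaches_endpoint v (h E hN)
  · intro h E hN
    exact reaches_endpoint_of_reaches_wrap_zero (h _ (by rwa [pebTotal_pushDist]) _ 0 rfl)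
end

section
/- For every integer k ≥ 1, on the path P_{4k+2} with endpoints x_1 and x_{4k+2} one has ρ(P_{4k+2}, {2·δ_{x_1}, 2·δ_{x_{4k+2}}}) = (2^{2k+3} + 1)/3 and 2·ρ(P_{4k+2}, {δ_{x_1}, δ_{x_{4k+2}}}) = (2^{2k+3} − 2)/3; in particular ρ(P_{4k+2}, {2·δ_{x_1}, 2·δ_{x_{4k+2}}}) > 2·ρ(P_{4k+2}, {δ_{x_1}, δ_{x_{4k+2}}}). -/
open scoped BigOperators

/-!
On the path with vertices `0, …, n`, `t` pebbles can be brought to `n` iff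
`∑ D i * 2 ^ i ≥ t * 2 ^ n`: this weight is invariant under moves towards `n` and decreases under
all others, and pushing pairs of pebbles towards `n` attains it. By reflection the same holds for
`0` with the reversed weight. So for `n = 4k + 1` a distribution is unsolvable iff both weights
are below `t * 2 ^ n`. A pebble on `i` adds `2 ^ i + 2 ^ (n - i) ≥ 3 * 4 ^ k` to their sum, with
equality exactly on the two middle vertices, which bounds the size of unsolvable distributions;
splitting pebbles evenly between the middle vertices attains the bound. For `t = 1` one more
pebble is lost: a pebble off the middle costs at least `9/2 * 4 ^ k`, and on the middle vertices
alone each weight is `4 ^ k` times an integer.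
-/

theorem three_mul_two_pow_le_add {i j m : ℕ} (h : i + j = 2 * m + 1) :
    3 * 2 ^ m ≤ 2 ^ i + 2 ^ j := by
  wlog hij : i ≤ j generalizing i j
  · rw [add_comm]; exact this (by omega) (by omega)
  rcases (show i = m ∨ m + 2 ≤ j by omega) with rfl | hj
  · obtain rfl : j = i + 1 := by omega
    rw [pow_succ]; omega
  · have : 2 ^ m * 2 ^ 2 ≤ 2 ^ j := by
      rw [← pow_add]; exact Nat.pow_le_pow_right two_pos hj
    have := Nat.two_pow_pos i
    omega

theorem nine_mul_two_pow_le {i j m : ℕ} (h : i + j = 2 * m + 1) (hi : i ≠ m) (hj : j ≠ m) :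
    9 * 2 ^ m ≤ 2 * (2 ^ i + 2 ^ j) := by
  wlog hij : i ≤ j generalizing i j
  · rw [add_comm (2 ^ i)]; exact this (by omega) hj hi (by omega)
  rcases (show j = m + 2 ∨ m + 3 ≤ j by omega) with rfl | hj
  · obtain rfl : m = i + 1 := by omega
    simp only [pow_add, pow_one]; omega
  · have : 2 ^ m * 2 ^ 3 ≤ 2 ^ j := by
      rw [← pow_add]; exact Nat.pow_le_pow_right two_pos hj
    have := Nat.two_pow_pos i
    omega

theorem two_pow_two_mul_mod_three (m : ℕ) : 2 ^ (2 * m) % 3 = 1 := by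
  rw [pow_mul, Nat.pow_mod]; norm_num

theorem sum_mul_two_pow_lt {n : ℕ} {a : Fin n → ℕ} (h : ∀ i, a i < 2) :
    ∑ i, a i * 2 ^ (i : ℕ) < 2 ^ n :=
  calc ∑ i, a i * 2 ^ (i : ℕ) ≤ ∑ i : Fin n, 2 ^ (i : ℕ) :=
        Finset.sum_le_sum fun i _ => by nlinarith [h i, Nat.one_le_two_pow (n := i)]
    _ = ∑ i ∈ Finset.range n, 2 ^ i := Fin.sum_univ_eq_sum_range (2 ^ ·) n
    _ < 2 ^ n := Nat.geomSum_lt le_rfl fun _ => Finset.mem_range.mp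

section General

open Finset

variable {V : Type*} [DecidableEq V]

theorem sum_mul_move_add [Fintype V] {D D' : V → ℕ} {u v : V} (huv : u ≠ v) (hu : 2 ≤ D u)
    (hD' : D' = fun w => if w = u then D u - 2 else if w = v then D v + 1 else D w)
    (X : V → ℕ) : ∑ w, D' w * X w + 2 * X u = ∑ w, D w * X w + X v := by
  subst hD'
  have key : ∀ w, (if w = u then D u - 2 else if w = v then D v + 1 else D w) * X w +
      (if w = u then 2 * X u else 0) = D w * X w + if w = v then X v else 0 := by
    intro w
    by_cases hwu : w = u
    · subst hwu
      simp only [if_pos, if_neg huv]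
      rw [← add_mul, Nat.sub_add_cancel hu, add_zero]
    · by_cases hwv : w = v <;> simp [hwu, hwv, Ne.symm huv, add_mul]
  have hsum := sum_congr rfl fun w (_ : w ∈ univ) => key w
  rwa [sum_add_distrib, sum_add_distrib, sum_ite_eq', sum_ite_eq', if_pos (mem_univ _),
    if_pos (mem_univ _)] at hsum

theorem reaches_unitDist_of_le (G : SimpleGraph V) {D : V → ℕ} {t : ℕ} {v : V} (h : t ≤ D v) :
    Reaches G D (unitDist t v) :=
  ⟨D, .refl, fun w => by unfold unitDist; split_ifs with hw <;> simp [hw, h]⟩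

variable {V' : Type*} [DecidableEq V'] {G : SimpleGraph V} {G' : SimpleGraph V'}

theorem PebMove.comp_iso (e : G ≃g G') {D D' : V' → ℕ} (h : PebMove G' D D') :
    PebMove G (D ∘ e) (D' ∘ e) := by
  obtain ⟨u, v, hadj, hu, rfl⟩ := h
  refine ⟨e.symm u, e.symm v, e.symm.map_adj_iff.mpr hadj, by simpa using hu, ?_⟩
  funext w
  simp only [Function.comp_apply, RelIso.apply_symm_apply, ← e.eq_symm_apply]

theorem Reaches.comp_iso (e : G ≃g G') {D T : V' → ℕ} (h : Reaches G' D T) :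
    Reaches G (D ∘ e) (T ∘ e) := by
  obtain ⟨D'', hsteps, hle⟩ := h
  exact ⟨D'' ∘ e, hsteps.lift (· ∘ e) fun _ _ => PebMove.comp_iso e, fun v => hle (e v)⟩

theorem reaches_comp_iso_iff (e : G ≃g G') {D T : V' → ℕ} :
    Reaches G (D ∘ e) (T ∘ e) ↔ Reaches G' D T := by
  refine ⟨fun h => ?_, Reaches.comp_iso e⟩
  simpa [Function.comp_def] using h.comp_iso e.symm

theorem unitDist_comp_iso (e : V ≃ V') (t : ℕ) (v : V') :
    unitDist t v ∘ e = unitDist t (e.symm v) := by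
  funext w
  simp [unitDist, ← e.eq_symm_apply]

theorem tsPeb_eq_of [Fintype V] {S : Set (V → ℕ)} {N : ℕ}
    (hbound : ∀ D, (∀ T ∈ S, ¬ Reaches G D T) → pebTotal D < N)
    (W : V → ℕ) (hW : pebTotal W + 1 = N) (hWS : ∀ T ∈ S, ¬ Reaches G W T) :
    tsPeb G S = N := by
  refine le_antisymm (sInf_le fun D hD => ?_) (le_sInf fun M hM => ?_)
  · by_contra! h
    exact (hbound D h).not_ge (by exact_mod_cast hD)
  · by_contra! hlt
    rw [← hW, Nat.cast_add, Nat.cast_one, ENat.lt_add_one_iff (ENat.natCast_ne_top _)] at hlt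
    obtain ⟨T, hT, hreach⟩ := hM W hlt
    exact hWS T hT hreach

end General

namespace PathPebbling

open Finset SimpleGraph

/-- The classical pebbling weight towards the last vertex of the path, scaled by `2 ^ (n - 1)`:
moves towards the last vertex preserve it, all other moves decrease it. -/
def weight {n : ℕ} (D : Fin n → ℕ) : ℕ := ∑ i, D i * 2 ^ (i : ℕ)

variable {n t : ℕ}

theorem weight_le_of_pebMove {D D' : Fin n → ℕ} (h : PebMove (pathGraph n) D D') :
    weight D' ≤ weight D := by
  obtain ⟨u, v, hadj, hu, hD'⟩ := h
  have hmove := sum_mul_move_add hadj.ne hu hD' fun i => 2 ^ (i : ℕ)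
  have hpow : 2 ^ (v : ℕ) ≤ 2 * 2 ^ (u : ℕ) := by
    rcases pathGraph_adj.mp hadj with huv | hvu
    · rw [← huv, pow_succ, mul_comm]
    · rw [← hvu, pow_succ]; omega
  unfold weight
  omega

theorem weight_le_of_reflTransGen {D D' : Fin n → ℕ}
    (h : Relation.ReflTransGen (PebMove (pathGraph n)) D D') : weight D' ≤ weight D := by
  induction h with
  | refl => exact le_rfl
  | tail _ hmove ih => exact (weight_le_of_pebMove hmove).trans ih

theorem weight_mono {D D' : Fin n → ℕ} (h : ∀ i, D i ≤ D' i) : weight D ≤ weight D' :=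
  sum_le_sum fun i _ => Nat.mul_le_mul_right _ (h i)

theorem weight_unitDist (v : Fin n) : weight (unitDist t v) = t * 2 ^ (v : ℕ) := by
  unfold weight unitDist
  rw [sum_eq_single v (fun i _ hi => by rw [if_neg hi, zero_mul]) (absurd (mem_univ v)),
    if_pos rfl]

theorem le_weight_of_reaches {D : Fin (n + 1) → ℕ}
    (h : Reaches (pathGraph (n + 1)) D (unitDist t (Fin.last n))) : t * 2 ^ n ≤ weight D := by
  obtain ⟨D'', hsteps, hle⟩ := h
  simpa [weight_unitDist] using (weight_mono hle).trans (weight_le_of_reflTransGen hsteps)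

/-- Pebbles are pushed one step towards the last vertex, two at a time, until no vertex other
than the last one holds two pebbles; the moment `∑ D i * dist(i, last)` decreases. -/
theorem reaches_of_le_weight {D : Fin (n + 1) → ℕ} (h : t * 2 ^ n ≤ weight D) :
    Reaches (pathGraph (n + 1)) D (unitDist t (Fin.last n)) := by
  induction hμ : ∑ i, D i * (i.rev : ℕ) using Nat.strong_induction_on generalizing D with
  | _ μ ih =>
  by_cases hex : ∃ j : Fin n, 2 ≤ D j.castSucc
  · obtain ⟨j, hj⟩ := hex
    have hne : j.castSucc ≠ j.succ := Fin.castSucc_lt_succ.ne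
    set D' := fun w => if w = j.castSucc then D j.castSucc - 2
      else if w = j.succ then D j.succ + 1 else D w with hD'
    have hmove : PebMove (pathGraph (n + 1)) D D' :=
      ⟨j.castSucc, j.succ, pathGraph_adj.mpr (Or.inl rfl), hj, hD'⟩
    have hweight := sum_mul_move_add hne hj hD' fun i => 2 ^ (i : ℕ)
    have hmoment := sum_mul_move_add hne hj hD' fun i => (i.rev : ℕ)
    simp only [Fin.val_castSucc, Fin.val_succ, Fin.val_rev, pow_succ] at hweight hmoment hμ
    unfold weight at h
    obtain ⟨D'', hsteps, hle⟩ :=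
      ih _ (by simp only [Fin.val_rev]; omega) (D := D') (by unfold weight; omega) rfl
    exact ⟨D'', .head hmove hsteps, hle⟩
  · push Not at hex
    apply reaches_unitDist_of_le
    have hlow := sum_mul_two_pow_lt hex
    rw [weight, Fin.sum_univ_castSucc] at h
    simp only [Fin.val_castSucc, Fin.val_last] at hlow h
    by_contra! hlt
    nlinarith [Nat.mul_le_mul_right (2 ^ n) (Nat.succ_le_of_lt hlt)]

theorem reaches_unitDist_last_iff {D : Fin (n + 1) → ℕ} :
    Reaches (pathGraph (n + 1)) D (unitDist t (Fin.last n)) ↔ t * 2 ^ n ≤ weight D :=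
  ⟨le_weight_of_reaches, reaches_of_le_weight⟩

def revIso (n : ℕ) : pathGraph n ≃g pathGraph n where
  toEquiv := Fin.revPerm
  map_rel_iff' := by
    intro u v
    simp only [Fin.revPerm_apply, pathGraph_adj, Fin.val_rev]
    omega

theorem reaches_unitDist_zero_iff {D : Fin (n + 1) → ℕ} :
    Reaches (pathGraph (n + 1)) D (unitDist t 0) ↔ t * 2 ^ n ≤ weight (D ∘ Fin.rev) := by
  rw [← reaches_comp_iso_iff (revIso (n + 1)), ← reaches_unitDist_last_iff]
  exact Iff.of_eq (congrArg _ (unitDist_comp_iso (revIso (n + 1)).toEquiv t 0))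

theorem weight_comp_rev (D : Fin n → ℕ) :
    weight (D ∘ Fin.rev) = ∑ i, D i * 2 ^ (i.rev : ℕ) :=
  Fintype.sum_equiv Fin.revPerm _ _ fun i => by simp

theorem weight_add_weight_comp_rev (D : Fin n → ℕ) :
    weight D + weight (D ∘ Fin.rev) = ∑ i, D i * (2 ^ (i : ℕ) + 2 ^ (i.rev : ℕ)) := by
  rw [weight_comp_rev, weight, ← sum_add_distrib]
  simp only [mul_add]

theorem tsPeb_endpoints_eq_of {N : ℕ}
    (hbound : ∀ D : Fin (n + 1) → ℕ,
      weight D < t * 2 ^ n → weight (D ∘ Fin.rev) < t * 2 ^ n → pebTotal D < N)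
    {W : Fin (n + 1) → ℕ} (hW : pebTotal W + 1 = N) (hWlast : weight W < t * 2 ^ n)
    (hWzero : weight (W ∘ Fin.rev) < t * 2 ^ n) :
    tsPeb (pathGraph (n + 1)) {unitDist t 0, unitDist t (Fin.last n)} = N := by
  refine tsPeb_eq_of (fun D hD => hbound D ?_ ?_) W hW ?_
  · exact not_le.mp fun h => hD _ (Set.mem_insert_of_mem _ rfl) (reaches_of_le_weight h)
  · exact not_le.mp fun h => hD _ (Set.mem_insert _ _) (reaches_unitDist_zero_iff.mpr h)
  · rintro T (rfl | rfl) hreach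
    · exact (reaches_unitDist_zero_iff.mp hreach).not_gt hWzero
    · exact (reaches_unitDist_last_iff.mp hreach).not_gt hWlast

section Middle

variable {k : ℕ}

theorem val_add_val_rev (i : Fin (4 * k + 2)) : (i : ℕ) + i.rev = 2 * (2 * k) + 1 := by
  rw [Fin.val_rev]; omega

theorem three_mul_pebTotal_le (D : Fin (4 * k + 2) → ℕ) :
    3 * 2 ^ (2 * k) * pebTotal D ≤ weight D + weight (D ∘ Fin.rev) := by
  rw [weight_add_weight_comp_rev, pebTotal, mul_sum]
  refine sum_le_sum fun i _ => ?_
  rw [mul_comm]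
  exact Nat.mul_le_mul_left _ (three_mul_two_pow_le_add (val_add_val_rev i))

theorem three_mul_two_mul_pebTotal_add_one_le {D : Fin (4 * k + 2) → ℕ} {i₀ : Fin (4 * k + 2)}
    (hD : D i₀ ≠ 0) (h₁ : (i₀ : ℕ) ≠ 2 * k) (h₂ : (i₀ : ℕ) ≠ 2 * k + 1) :
    3 * 2 ^ (2 * k) * (2 * pebTotal D + 1) ≤ 2 * (weight D + weight (D ∘ Fin.rev)) := by
  have hfar := nine_mul_two_pow_le (val_add_val_rev i₀) h₁ (by rw [Fin.val_rev]; omega)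
  have hrest : 3 * 2 ^ (2 * k) * ∑ i ∈ univ.erase i₀, D i ≤
      ∑ i ∈ univ.erase i₀, D i * (2 ^ (i : ℕ) + 2 ^ (i.rev : ℕ)) := by
    rw [mul_sum]
    refine sum_le_sum fun i _ => ?_
    rw [mul_comm]
    exact Nat.mul_le_mul_left _ (three_mul_two_pow_le_add (val_add_val_rev i))
  have hfirst : 3 * 2 ^ (2 * k) * (2 * D i₀ + 1) ≤
      2 * (D i₀ * (2 ^ (i₀ : ℕ) + 2 ^ (i₀.rev : ℕ))) := by
    nlinarith [Nat.mul_le_mul_left (D i₀) hfar,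
      Nat.mul_le_mul_left (3 * 2 ^ (2 * k)) (Nat.one_le_iff_ne_zero.mpr hD)]
  rw [weight_add_weight_comp_rev, pebTotal, ← add_sum_erase _ _ (mem_univ i₀),
    ← add_sum_erase _ _ (mem_univ i₀)]
  nlinarith

/-- `A` pebbles on `x_{2k+1}` and `B` on `x_{2k+2}`, the middle vertices of `P_{4k+2}` in the
paper's numbering (`Fin` indices are shifted by one). -/
def midDist (k A B : ℕ) : Fin (4 * k + 2) → ℕ :=
  fun i => if (i : ℕ) = 2 * k then A else if (i : ℕ) = 2 * k + 1 then B else 0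

theorem sum_midDist_mul (A B : ℕ) (X : Fin (4 * k + 2) → ℕ) :
    ∑ i, midDist k A B i * X i = A * X ⟨2 * k, by omega⟩ + B * X ⟨2 * k + 1, by omega⟩ := by
  rw [Fintype.sum_eq_add ⟨2 * k, by omega⟩ ⟨2 * k + 1, by omega⟩ (by simp [Fin.ext_iff])]
  · simp [midDist]
  · rintro i ⟨h₁, h₂⟩
    simp [midDist, Fin.ext_iff] at h₁ h₂ ⊢
    simp [h₁, h₂]

theorem pebTotal_midDist (A B : ℕ) : pebTotal (midDist k A B) = A + B := by
  simpa [pebTotal] using sum_midDist_mul (k := k) A B 1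

theorem weight_midDist (A B : ℕ) : weight (midDist k A B) = 2 ^ (2 * k) * (A + 2 * B) := by
  rw [weight, sum_midDist_mul, pow_succ]; ring

theorem midDist_comp_rev (A B : ℕ) : midDist k A B ∘ Fin.rev = midDist k B A := by
  funext i
  simp only [Function.comp_apply, midDist, Fin.val_rev]
  split_ifs <;> omega

theorem exists_eq_midDist {D : Fin (4 * k + 2) → ℕ}
    (hD : ∀ i : Fin (4 * k + 2), D i ≠ 0 → (i : ℕ) = 2 * k ∨ (i : ℕ) = 2 * k + 1) :
    ∃ A B, D = midDist k A B := by
  refine ⟨D ⟨2 * k, by omega⟩, D ⟨2 * k + 1, by omega⟩, funext fun i => ?_⟩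
  unfold midDist
  split_ifs with h₁ h₂
  · exact congrArg D (Fin.ext h₁)
  · exact congrArg D (Fin.ext h₂)
  · by_contra h
    exact (hD i h).elim h₁ h₂

theorem two_pow_four_mul_add_one (k : ℕ) : 2 ^ (4 * k + 1) = 2 * 2 ^ (2 * k) * 2 ^ (2 * k) := by
  rw [mul_assoc, ← pow_add, ← pow_succ']; ring_nf

theorem weight_midDist_self_lt {t c : ℕ} (h : 3 * c < 2 * t * 2 ^ (2 * k)) :
    weight (midDist k c c) < t * 2 ^ (4 * k + 1) := by
  rw [weight_midDist, two_pow_four_mul_add_one]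
  have hq := Nat.two_pow_pos (2 * k)
  nlinarith

theorem pebTotal_lt_of_weight_lt_two {D : Fin (4 * k + 2) → ℕ}
    (hlast : weight D < 2 * 2 ^ (4 * k + 1)) (hzero : weight (D ∘ Fin.rev) < 2 * 2 ^ (4 * k + 1)) :
    pebTotal D < (2 ^ (2 * k + 3) + 1) / 3 := by
  have hsum := three_mul_pebTotal_le D
  have hmod := two_pow_two_mul_mod_three k
  have h8 : 2 ^ (2 * k + 3) = 8 * 2 ^ (2 * k) := by ring
  rw [two_pow_four_mul_add_one] at hlast hzero
  have : 3 * pebTotal D < 8 * 2 ^ (2 * k) :=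
    Nat.lt_of_mul_lt_mul_left (a := 2 ^ (2 * k)) (by nlinarith)
  omega

theorem pebTotal_lt_of_weight_lt_one {D : Fin (4 * k + 2) → ℕ}
    (hlast : weight D < 1 * 2 ^ (4 * k + 1)) (hzero : weight (D ∘ Fin.rev) < 1 * 2 ^ (4 * k + 1)) :
    pebTotal D < (2 ^ (2 * k + 2) - 1) / 3 := by
  have hmod := two_pow_two_mul_mod_three k
  have h4 : 2 ^ (2 * k + 2) = 4 * 2 ^ (2 * k) := by ring
  rw [two_pow_four_mul_add_one] at hlast hzero
  by_cases hfar : ∃ i : Fin (4 * k + 2), D i ≠ 0 ∧ (i : ℕ) ≠ 2 * k ∧ (i : ℕ) ≠ 2 * k + 1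
  · obtain ⟨i₀, hD, h₁, h₂⟩ := hfar
    have hsum := three_mul_two_mul_pebTotal_add_one_le hD h₁ h₂
    have : 3 * (2 * pebTotal D + 1) < 8 * 2 ^ (2 * k) :=
      Nat.lt_of_mul_lt_mul_left (a := 2 ^ (2 * k)) (by nlinarith)
    omega
  · obtain ⟨A, B, rfl⟩ := exists_eq_midDist fun i hi => by
      by_contra! h
      exact hfar ⟨i, hi, h⟩
    rw [weight_midDist] at hlast
    rw [midDist_comp_rev, weight_midDist] at hzero
    have hAB : A + 2 * B < 2 * 2 ^ (2 * k) :=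
      Nat.lt_of_mul_lt_mul_left (a := 2 ^ (2 * k)) (by nlinarith)
    have hBA : B + 2 * A < 2 * 2 ^ (2 * k) :=
      Nat.lt_of_mul_lt_mul_left (a := 2 ^ (2 * k)) (by nlinarith)
    rw [pebTotal_midDist]
    omega

theorem tsPeb_endpoints_two (k : ℕ) :
    tsPeb (pathGraph (4 * k + 2)) {unitDist 2 0, unitDist 2 (Fin.last (4 * k + 1))} =
      ((2 ^ (2 * k + 3) + 1) / 3 : ℕ) := by
  have hmod := two_pow_two_mul_mod_three k
  have h4 : 2 ^ (2 * k + 2) = 4 * 2 ^ (2 * k) := by ring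
  have h8 : 2 ^ (2 * k + 3) = 8 * 2 ^ (2 * k) := by ring
  set c := (2 ^ (2 * k + 2) - 1) / 3
  have hW : weight (midDist k c c) < 2 * 2 ^ (4 * k + 1) := weight_midDist_self_lt (by omega)
  refine tsPeb_endpoints_eq_of (fun _ => pebTotal_lt_of_weight_lt_two) (W := midDist k c c)
    ?_ hW (by rwa [midDist_comp_rev])
  rw [pebTotal_midDist]
  omega

theorem tsPeb_endpoints_one (k : ℕ) :
    tsPeb (pathGraph (4 * k + 2)) {unitDist 1 0, unitDist 1 (Fin.last (4 * k + 1))} =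
      ((2 ^ (2 * k + 2) - 1) / 3 : ℕ) := by
  have hmod := two_pow_two_mul_mod_three k
  have h2 : 2 ^ (2 * k + 1) = 2 * 2 ^ (2 * k) := by ring
  have h4 : 2 ^ (2 * k + 2) = 4 * 2 ^ (2 * k) := by ring
  set c := (2 ^ (2 * k + 1) - 2) / 3
  have hW : weight (midDist k c c) < 1 * 2 ^ (4 * k + 1) := weight_midDist_self_lt (by omega)
  refine tsPeb_endpoints_eq_of (fun _ => pebTotal_lt_of_weight_lt_one) (W := midDist k c c)
    ?_ hW (by rwa [midDist_comp_rev])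
  rw [pebTotal_midDist]
  omega

end Middle

end PathPebbling

open SimpleGraph in
/-- On the path `P_{4k+2}`, the target-selectable pebbling number of the two
double-endpoint targets exceeds twice that of the two single-endpoint targets:
`ρ(P_{4k+2}, 𝒟₂) = (2^{2k+3}+1)/3` while `2·ρ(P_{4k+2}, 𝒟₁) = (2^{2k+3}-2)/3`. -/
theorem ts_path_counterexample (k : ℕ) :
    tsPeb (pathGraph (4 * k + 2))
        {unitDist 2 (⟨0, by omega⟩ : Fin (4 * k + 2)),
         unitDist 2 (⟨4 * k + 1, by omega⟩ : Fin (4 * k + 2))}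
      = (((2 ^ (2 * k + 3) + 1) / 3 : ℕ) : ℕ∞) ∧
    2 * tsPeb (pathGraph (4 * k + 2))
        {unitDist 1 (⟨0, by omega⟩ : Fin (4 * k + 2)),
         unitDist 1 (⟨4 * k + 1, by omega⟩ : Fin (4 * k + 2))}
      = (((2 ^ (2 * k + 3) - 2) / 3 : ℕ) : ℕ∞) ∧
    2 * tsPeb (pathGraph (4 * k + 2))
        {unitDist 1 (⟨0, by omega⟩ : Fin (4 * k + 2)),
         unitDist 1 (⟨4 * k + 1, by omega⟩ : Fin (4 * k + 2))}
      < tsPeb (pathGraph (4 * k + 2))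
        {unitDist 2 (⟨0, by omega⟩ : Fin (4 * k + 2)),
         unitDist 2 (⟨4 * k + 1, by omega⟩ : Fin (4 * k + 2))} := by
  have hmod := two_pow_two_mul_mod_three k
  have h8 : 2 ^ (2 * k + 3) = 2 * 2 ^ (2 * k + 2) := by ring
  have h4 : 2 ^ (2 * k + 2) = 4 * 2 ^ (2 * k) := by ring
  have htwice : 2 * ((2 ^ (2 * k + 2) - 1) / 3) = (2 ^ (2 * k + 3) - 2) / 3 := by omega
  have hlt : 2 * ((2 ^ (2 * k + 2) - 1) / 3) < (2 ^ (2 * k + 3) + 1) / 3 := by omega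
  rw [show (⟨0, _⟩ : Fin (4 * k + 2)) = 0 from rfl,
    show (⟨4 * k + 1, _⟩ : Fin (4 * k + 2)) = Fin.last (4 * k + 1) from rfl,
    PathPebbling.tsPeb_endpoints_one k, PathPebbling.tsPeb_endpoints_two k]
  exact ⟨rfl, by exact_mod_cast htwice, by exact_mod_cast hlt⟩
end
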